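/- arXiv:2309.02011 — 5 statements merged into one kernel-verified Lean document; each statement's English description precedes it below -/
import Mathlib

section
/- Suppose the symmetric matrix f ∈ ℝ^{h×h} has at least one negative eigenvalue with most-negative eigenvalue λ_min and corresponding unit eigenvector v. Then under the constraint ‖W₂‖_F ≤ c, the minimum of Tr(W₂^⊤ f W₂) over W₂ ∈ ℝ^{h×z} equals c²λ_min, attained when W₂W₂^⊤ = c² v v^⊤, i.e. W₂ has a single nonzero column proportional to v (rank-one solution). -/
/-!
Column by column, `w ⬝ᵥ f *ᵥ w ≥ lam * (w ⬝ᵥ w)` because `f - lam • 1` is positive semidefinite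
(all its eigenvalues are `≥ 0` by minimality of `lam`). Summing over the columns of `W₂` gives
`Tr(W₂ᵀ f W₂) ≥ lam ‖W₂‖_F² ≥ c² lam`, the last step because `lam < 0`. The bound is attained by
putting `c • v` in one column and zeros elsewhere.
-/

open Matrix

namespace Matrix

section Rayleigh

variable {n : Type*} [Fintype n] [DecidableEq n] {A : Matrix n n ℝ} {lam : ℝ}

lemma IsHermitian.posSemidef_sub_smul_one (hA : A.IsHermitian)
    (hmin : ∀ (μ : ℝ) (w : n → ℝ), w ≠ 0 → A *ᵥ w = μ • w → lam ≤ μ) :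
    (A - lam • 1).PosSemidef := by
  have hg : (A - lam • 1).IsHermitian := hA.sub (isHermitian_one.smul (IsSelfAdjoint.all lam))
  refine hg.posSemidef_iff_eigenvalues_nonneg.mpr fun i => ?_
  show (0 : ℝ) ≤ hg.eigenvalues i
  set b : n → ℝ := ⇑(hg.eigenvectorBasis i)
  have hb : b ≠ 0 := (WithLp.ofLp_eq_zero 2).ne.2 (hg.eigenvectorBasis.orthonormal.ne_zero i)
  have hAb : A *ᵥ b = (hg.eigenvalues i + lam) • b := by
    have hgb := hg.mulVec_eigenvectorBasis i
    rw [sub_mulVec, smul_mulVec, one_mulVec] at hgb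
    rw [add_smul, ← hgb, sub_add_cancel]
  linarith [hmin _ _ hb hAb]

lemma IsHermitian.mul_dotProduct_self_le (hA : A.IsHermitian)
    (hmin : ∀ (μ : ℝ) (w : n → ℝ), w ≠ 0 → A *ᵥ w = μ • w → lam ≤ μ) (w : n → ℝ) :
    lam * (w ⬝ᵥ w) ≤ w ⬝ᵥ A *ᵥ w := by
  have h := (hA.posSemidef_sub_smul_one hmin).dotProduct_mulVec_nonneg w
  rw [star_trivial, sub_mulVec, smul_mulVec, one_mulVec, dotProduct_sub, dotProduct_smul,
    smul_eq_mul] at h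
  linarith

end Rayleigh

variable {R : Type*} [CommSemiring R] {m n : Type*} [Fintype n]

lemma vecMulVec_mul_transpose_self (u : m → R) (e : n → R) :
    vecMulVec u e * (vecMulVec u e)ᵀ = (e ⬝ᵥ e) • vecMulVec u u := by
  rw [transpose_vecMulVec, vecMulVec_mul_vecMulVec, vecMulVec_smul]

variable [Fintype m]

lemma trace_transpose_mul_mul_eq_sum (A : Matrix m m R) (W : Matrix m n R) :
    trace (Wᵀ * A * W) = ∑ j, Wᵀ j ⬝ᵥ A *ᵥ Wᵀ j := by
  simp only [trace, diag, Matrix.mul_assoc]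
  rfl

lemma trace_transpose_mul_self_eq_sum (W : Matrix m n R) :
    trace (Wᵀ * W) = ∑ j, Wᵀ j ⬝ᵥ Wᵀ j :=
  rfl

lemma trace_transpose_mul_mul_vecMulVec (A : Matrix m m R) (u : m → R) (e : n → R) :
    trace ((vecMulVec u e)ᵀ * A * vecMulVec u e) = (u ⬝ᵥ A *ᵥ u) * (e ⬝ᵥ e) := by
  rw [transpose_vecMulVec, vecMulVec_mul, vecMulVec_mul_vecMulVec, trace_vecMulVec,
    dotProduct_smul, smul_eq_mul, ← dotProduct_mulVec, mul_comm]

lemma IsHermitian.mul_trace_transpose_mul_le [DecidableEq m] {A : Matrix m m ℝ} {lam : ℝ}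
    (hA : A.IsHermitian)
    (hmin : ∀ (μ : ℝ) (w : m → ℝ), w ≠ 0 → A *ᵥ w = μ • w → lam ≤ μ) (W : Matrix m n ℝ) :
    lam * trace (Wᵀ * W) ≤ trace (Wᵀ * A * W) := by
  calc lam * trace (Wᵀ * W) = ∑ j, lam * (Wᵀ j ⬝ᵥ Wᵀ j) := by
        rw [trace_transpose_mul_self_eq_sum, Finset.mul_sum]
    _ ≤ trace (Wᵀ * A * W) := by
        rw [trace_transpose_mul_mul_eq_sum]
        exact Finset.sum_le_sum fun j _ => hA.mul_dotProduct_self_le hmin _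

end Matrix

theorem stmt2_general {h z : ℕ} (f : Matrix (Fin h) (Fin h) ℝ) (hf : f.IsSymm)
    (lam : ℝ) (hneg : lam < 0) (v : Fin h → ℝ) (hv : v ⬝ᵥ v = 1)
    (heig : f.mulVec v = lam • v)
    (hmin : ∀ (μ : ℝ) (w : Fin h → ℝ), w ≠ 0 → f.mulVec w = μ • w → lam ≤ μ)
    (c : ℝ) (hz : 0 < z) :
    IsLeast {r : ℝ | ∃ W₂ : Matrix (Fin h) (Fin z) ℝ,
        Matrix.trace (W₂ᵀ * W₂) ≤ c ^ 2 ∧ r = Matrix.trace (W₂ᵀ * f * W₂)}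
      (c ^ 2 * lam) ∧
    ∃ W₂ : Matrix (Fin h) (Fin z) ℝ, Matrix.trace (W₂ᵀ * W₂) ≤ c ^ 2 ∧
      W₂ * W₂ᵀ = c ^ 2 • vecMulVec v v ∧
      Matrix.trace (W₂ᵀ * f * W₂) = c ^ 2 * lam := by
  set e : Fin z → ℝ := Pi.single ⟨0, hz⟩ 1
  have he : e ⬝ᵥ e = 1 := by simp [e]
  set W := vecMulVec (c • v) e
  have hWW : trace (Wᵀ * W) = c ^ 2 := by
    rw [← Matrix.mul_one Wᵀ, trace_transpose_mul_mul_vecMulVec, one_mulVec, he, smul_dotProduct,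
      dotProduct_smul, hv]
    simp only [smul_eq_mul]
    ring
  have hWfW : trace (Wᵀ * f * W) = c ^ 2 * lam := by
    rw [trace_transpose_mul_mul_vecMulVec, he, mulVec_smul, heig, smul_dotProduct,
      dotProduct_smul, dotProduct_smul, hv]
    simp only [smul_eq_mul]
    ring
  refine ⟨⟨⟨W, hWW.le, hWfW.symm⟩, ?_⟩, W, hWW.le, ?_, hWfW⟩
  · rintro _ ⟨M, hM, rfl⟩
    calc c ^ 2 * lam ≤ lam * trace (Mᵀ * M) := by
          rw [mul_comm]
          exact mul_le_mul_of_nonpos_left hM hneg.le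
      _ ≤ trace (Mᵀ * f * M) :=
        (isHermitian_iff_isSymm.mpr hf).mul_trace_transpose_mul_le hmin M
  · rw [vecMulVec_mul_transpose_self, he, one_smul, smul_vecMulVec, vecMulVec_smul, smul_smul, sq]

/-- If the symmetric `f` has most-negative eigenvalue `lam < 0` with unit
eigenvector `v`, then under the Frobenius norm constraint `‖W₂‖_F ≤ c` the
minimum of `Tr(W₂ᵀ f W₂)` is `c² lam`, attained at a rank-one `W₂` with
`W₂W₂ᵀ = c² v vᵀ`. -/
theorem stmt2 {h z : ℕ} (f : Matrix (Fin h) (Fin h) ℝ) (hf : f.IsSymm)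
    (lam : ℝ) (hneg : lam < 0) (v : Fin h → ℝ) (hv : v ⬝ᵥ v = 1)
    (heig : f.mulVec v = lam • v)
    (hmin : ∀ (μ : ℝ) (w : Fin h → ℝ), w ≠ 0 → f.mulVec w = μ • w → lam ≤ μ)
    (c : ℝ) (hc : 0 ≤ c) (hz : 0 < z) :
    IsLeast {r : ℝ | ∃ W₂ : Matrix (Fin h) (Fin z) ℝ,
        Matrix.trace (W₂ᵀ * W₂) ≤ c ^ 2 ∧ r = Matrix.trace (W₂ᵀ * f * W₂)}
      (c ^ 2 * lam) ∧
    ∃ W₂ : Matrix (Fin h) (Fin z) ℝ, Matrix.trace (W₂ᵀ * W₂) ≤ c ^ 2 ∧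
      W₂ * W₂ᵀ = c ^ 2 • vecMulVec v v ∧
      Matrix.trace (W₂ᵀ * f * W₂) = c ^ 2 * lam :=
  stmt2_general f hf lam hneg v hv heig hmin c hz
end

section
/- Let W ∈ ℝ^{d×z} satisfy ‖W‖₂ ≤ 1 (operator norm), and let C ∈ ℝ^{d×d} be symmetric with l many strictly negative eigenvalues λ₁ ≤ ... ≤ λ_l < 0 and corresponding orthonormal eigenvectors c₁,...,c_l. Then the minimum of Tr(W^⊤ C W) over all W with ‖W‖₂ ≤ 1 equals Σ_{i=1}^{m} λᵢ where m = min{d, z, l}, and it is attained when WW^⊤ = Σ_{i=1}^{m} cᵢcᵢ^⊤, i.e. when all nonzero singular values of W equal 1 and its left singular vectors span the bottom-m eigenspace of C. -/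
/-!
Writing `C = Σ λᵢ vᵢvᵢᵀ` gives `Tr(Wᵀ C W) = Σ λᵢ tᵢ` with `tᵢ = ‖Wᵀ vᵢ‖²`. The weights satisfy
`0 ≤ tᵢ ≤ 1` (as `‖Wᵀ‖ ≤ 1`) and `Σ tᵢ = Tr(WᵀW) ≤ min d z`, and over such weights a
"bathtub" argument shows `Σ λᵢ tᵢ` is smallest when all weight sits on the `m` smallest
(negative) eigenvalues. That value is attained by any `W` with `WWᵀ = Σ_{i<m} vᵢvᵢᵀ`:
such a `W` exists because `m ≤ z`, and it has norm at most one because `WWᵀ` is an orthogonal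
projection.
-/

open Matrix Finset WithLp
open scoped Matrix.Norms.L2Operator

theorem sum_le_sum_mul_of_threshold {ι : Type*} [Fintype ι] (s : Finset ι) {f t : ι → ℝ} (μ : ℝ)
    (hs : ∀ i ∈ s, f i ≤ μ) (hsc : ∀ i ∉ s, μ ≤ f i)
    (ht0 : ∀ i, 0 ≤ t i) (ht1 : ∀ i, t i ≤ 1) (hμ : μ * #s ≤ μ * ∑ i, t i) :
    ∑ i ∈ s, f i ≤ ∑ i, f i * t i := by
  have hin : ∑ i ∈ s, (f i - μ) ≤ ∑ i ∈ s, (f i - μ) * t i :=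
    sum_le_sum fun i hi => by nlinarith [hs i hi, ht1 i]
  have hout : ∑ i ∈ s, (f i - μ) * t i ≤ ∑ i, (f i - μ) * t i :=
    sum_le_sum_of_subset_of_nonneg (subset_univ s) fun i _ hi =>
      mul_nonneg (sub_nonneg.2 (hsc i hi)) (ht0 i)
  calc ∑ i ∈ s, f i = ∑ i ∈ s, (f i - μ) + μ * #s := by
        rw [sum_sub_distrib, sum_const, nsmul_eq_mul]; ring
    _ ≤ ∑ i, (f i - μ) * t i + μ * ∑ i, t i := by linarith
    _ = ∑ i, f i * t i := by rw [mul_sum, ← sum_add_distrib]; congr 1; ext; ring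

theorem sum_filter_val_lt_min_le_sum_mul {d K : ℕ} {f t : Fin d → ℝ} (hf : Monotone f)
    (ht0 : ∀ i, 0 ≤ t i) (ht1 : ∀ i, t i ≤ 1) (htK : ∑ i, t i ≤ K) :
    ∑ i ∈ univ.filter (fun i : Fin d => (i : ℕ) < min K #{j | f j < 0}), f i ≤ ∑ i, f i * t i := by
  set l := #{j | f j < 0}
  have hneg (i : Fin d) : (i : ℕ) < l ↔ f i < 0 :=
    Fin.lt_card_filter_univ_iff_apply_of_imp _ fun i j hji hi => (hf hji).trans_lt hi
  rcases le_or_gt l K with hlK | hKl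
  · rw [min_eq_right hlK]
    refine sum_le_sum_mul_of_threshold _ 0 (fun i hi => ?_) (fun i hi => ?_) ht0 ht1 (by simp)
    · exact ((hneg i).1 (mem_filter.1 hi).2).le
    · exact not_lt.1 fun h => hi (mem_filter.2 ⟨mem_univ i, (hneg i).2 h⟩)
  · rw [min_eq_left hKl.le]
    have hKd : K < d := hKl.trans_le (card_le_univ _ |>.trans_eq (Fintype.card_fin d))
    let k : Fin d := ⟨K, hKd⟩
    have hk : f k < 0 := (hneg k).1 hKl
    refine sum_le_sum_mul_of_threshold _ (f k) (fun i hi => hf ?_) (fun i hi => hf ?_) ht0 ht1 ?_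
    · exact Fin.le_def.2 (mem_filter.1 hi).2.le
    · exact Fin.le_def.2 (not_lt.1 fun h => hi (mem_filter.2 ⟨mem_univ i, h⟩))
    · rw [Fin.card_filter_val_lt, min_eq_right hKd.le]
      exact mul_le_mul_of_nonpos_left htK hk.le

section
variable {ι m n : Type*} [Fintype m] [Fintype n]

omit [Fintype m] in
theorem transpose_of_mul_of [Fintype ι] {R : Type*} [CommSemiring R]
    (v w : ι → m → R) : (of v)ᵀ * of w = ∑ i, vecMulVec (v i) (w i) := by
  ext a b
  simp [mul_apply, Matrix.sum_apply, vecMulVec_apply]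

theorem trace_transpose_mul_vecMulVec_mul {R : Type*} [CommSemiring R] (W : Matrix m n R)
    (u : m → R) : trace (Wᵀ * vecMulVec u u * W) = (Wᵀ *ᵥ u) ⬝ᵥ (Wᵀ *ᵥ u) := by
  rw [mul_vecMulVec, vecMulVec_mul, trace_vecMulVec, ← mulVec_transpose]

theorem trace_transpose_mul_sum_smul_vecMulVec_mul {R : Type*} [CommSemiring R] (s : Finset ι)
    (W : Matrix m n R) (c : ι → R) (v : ι → m → R) :
    trace (Wᵀ * (∑ i ∈ s, c i • vecMulVec (v i) (v i)) * W)
      = ∑ i ∈ s, c i * ((Wᵀ *ᵥ v i) ⬝ᵥ (Wᵀ *ᵥ v i)) := by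
  simp only [Matrix.mul_sum, Matrix.sum_mul, trace_sum, Matrix.mul_smul, Matrix.smul_mul,
    trace_smul, trace_transpose_mul_vecMulVec_mul, smul_eq_mul]

theorem dotProduct_transpose_mulVec_self {R : Type*} [CommSemiring R] (W : Matrix m n R)
    (u : m → R) : (Wᵀ *ᵥ u) ⬝ᵥ (Wᵀ *ᵥ u) = u ⬝ᵥ ((W * Wᵀ) *ᵥ u) := by
  rw [← mulVec_mulVec, dotProduct_mulVec, vecMul_transpose, dotProduct_comm]

theorem dotProduct_self_eq_norm_sq (x : n → ℝ) : x ⬝ᵥ x = ‖toLp 2 x‖ ^ 2 := by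
  rw [← real_inner_self_eq_norm_sq, EuclideanSpace.inner_toLp_toLp, star_trivial]

variable [DecidableEq n]

theorem Matrix.l2_opNorm_transpose [DecidableEq m] (A : Matrix m n ℝ) : ‖Aᵀ‖ = ‖A‖ := by
  rw [← conjTranspose_eq_transpose_of_trivial, l2_opNorm_conjTranspose]

theorem dotProduct_mulVec_self_le {A : Matrix m n ℝ} (hA : ‖A‖ ≤ 1) (x : n → ℝ) :
    (A *ᵥ x) ⬝ᵥ (A *ᵥ x) ≤ x ⬝ᵥ x := by
  rw [dotProduct_self_eq_norm_sq, dotProduct_self_eq_norm_sq]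
  gcongr
  calc _ ≤ ‖A‖ * ‖toLp 2 x‖ := A.l2_opNorm_mulVec (toLp 2 x)
    _ ≤ ‖toLp 2 x‖ := mul_le_of_le_one_left (norm_nonneg _) hA

theorem trace_transpose_mul_self_le_card {W : Matrix m n ℝ} (hW : ‖W‖ ≤ 1) :
    trace (Wᵀ * W) ≤ Fintype.card n := by
  have hcol (k : n) : (Wᵀ * W) k k = (W *ᵥ Pi.single k 1) ⬝ᵥ (W *ᵥ Pi.single k 1) := by
    simp [mul_apply, mulVec_single, dotProduct]
  calc trace (Wᵀ * W) = ∑ k, (W *ᵥ Pi.single k 1) ⬝ᵥ (W *ᵥ Pi.single k 1) :=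
        sum_congr rfl fun k _ => hcol k
    _ ≤ ∑ _k : n, (1 : ℝ) := sum_le_sum fun k _ => by
        simpa using dotProduct_mulVec_self_le hW (Pi.single k 1)
    _ = Fintype.card n := by simp

theorem norm_le_one_of_isStarProjection_mul_transpose [DecidableEq m] {W : Matrix m n ℝ}
    (hW : IsStarProjection (W * Wᵀ)) : ‖W‖ ≤ 1 := by
  have h := l2_opNorm_conjTranspose_mul_self Wᵀ
  rw [conjTranspose_eq_transpose_of_trivial, transpose_transpose] at h
  rw [← l2_opNorm_conjTranspose, conjTranspose_eq_transpose_of_trivial]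
  nlinarith [hW.norm_le, norm_nonneg Wᵀ]

end

section Orthonormal
variable {m : Type*} [Fintype m] [DecidableEq m] {v : m → m → ℝ}
  (hv : ∀ i j, v i ⬝ᵥ v j = if i = j then 1 else 0)
include hv

theorem sum_vecMulVec_self_eq_one : ∑ i, vecMulVec (v i) (v i) = 1 := by
  have hV : of v * (of v)ᵀ = 1 := by
    ext i j
    simpa [mul_apply, one_apply, dotProduct] using hv i j
  rw [← transpose_of_mul_of, mul_eq_one_comm.mp hV]

theorem isStarProjection_sum_vecMulVec (s : Finset m) :
    IsStarProjection (∑ i ∈ s, vecMulVec (v i) (v i)) := by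
  refine ⟨?_, ?_⟩
  · have hvv (i j : m) : vecMulVec (v i) (v i) * vecMulVec (v j) (v j)
        = if i = j then vecMulVec (v i) (v i) else 0 := by
      rw [vecMulVec_mul_vecMulVec, hv]
      split_ifs <;> simp_all
    simp [IsIdempotentElem, Finset.sum_mul, Finset.mul_sum, hvv]
  · simp [IsSelfAdjoint, star_eq_conjTranspose]

theorem dotProduct_transpose_mulVec_self_le_one {n : Type*} [Fintype n] [DecidableEq n]
    {W : Matrix m n ℝ} (hW : ‖W‖ ≤ 1) (i : m) : (Wᵀ *ᵥ v i) ⬝ᵥ (Wᵀ *ᵥ v i) ≤ 1 := by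
  simpa [hv] using dotProduct_mulVec_self_le (W.l2_opNorm_transpose.trans_le hW) (v i)

theorem dotProduct_sum_vecMulVec_mulVec (s : Finset m) (i : m) :
    v i ⬝ᵥ ((∑ j ∈ s, vecMulVec (v j) (v j)) *ᵥ v i) = if i ∈ s then 1 else 0 := by
  simp [sum_mulVec, vecMulVec_mulVec, hv, apply_ite (dotProduct (v i))]

theorem sum_dotProduct_transpose_mulVec_le {n : Type*} [Fintype n] [DecidableEq n]
    {W : Matrix m n ℝ} (hW : ‖W‖ ≤ 1) :
    ∑ i, (Wᵀ *ᵥ v i) ⬝ᵥ (Wᵀ *ᵥ v i) ≤ min (Fintype.card m) (Fintype.card n) := by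
  rw [Nat.cast_min]
  refine le_min ?_ ?_
  · calc ∑ i, (Wᵀ *ᵥ v i) ⬝ᵥ (Wᵀ *ᵥ v i) ≤ ∑ _i : m, (1 : ℝ) := sum_le_sum fun i _ =>
          dotProduct_transpose_mulVec_self_le_one hv hW i
      _ = Fintype.card m := by simp
  · calc ∑ i, (Wᵀ *ᵥ v i) ⬝ᵥ (Wᵀ *ᵥ v i) = trace (Wᵀ * W) := by
          simpa [sum_vecMulVec_self_eq_one hv] using
            (trace_transpose_mul_sum_smul_vecMulVec_mul univ W 1 v).symm
      _ ≤ Fintype.card n := trace_transpose_mul_self_le_card hW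

end Orthonormal

theorem exists_mul_transpose_eq_sum_vecMulVec {ι m n R : Type*} [Fintype m] [Fintype n]
    [DecidableEq n] [CommSemiring R] (v : ι → m → R) (s : Finset ι)
    (hs : #s ≤ Fintype.card n) :
    ∃ W : Matrix m n R, W * Wᵀ = ∑ i ∈ s, vecMulVec (v i) (v i) := by
  classical
  obtain ⟨g⟩ := Function.Embedding.nonempty_of_card_le (α := s) (β := n) (by simpa using hs)
  refine ⟨(of fun i : s => v i)ᵀ * (1 : Matrix n n R).submatrix g id, ?_⟩
  have hg : (1 : Matrix n n R).submatrix g id * ((1 : Matrix n n R).submatrix g id)ᵀ = 1 := by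
    rw [transpose_submatrix, transpose_one, ← submatrix_mul _ _ _ _ _ Function.bijective_id,
      Matrix.one_mul, submatrix_one_embedding]
  rw [transpose_mul, transpose_transpose, Matrix.mul_assoc, ← Matrix.mul_assoc _ _ (of _),
    hg, Matrix.one_mul, transpose_of_mul_of]
  exact sum_coe_sort s fun i => vecMulVec (v i) (v i)

theorem stmt4_general {d z : ℕ} (C : Matrix (Fin d) (Fin d) ℝ)
    (lam : Fin d → ℝ) (hmono : Monotone lam)
    (v : Fin d → Fin d → ℝ) (horth : ∀ i j, v i ⬝ᵥ v j = if i = j then 1 else 0)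
    (hC : C = ∑ i, lam i • vecMulVec (v i) (v i))
    (l : ℕ) (hl : l = (Finset.univ.filter fun i : Fin d => lam i < 0).card)
    (m : ℕ) (hm : m = min (min d z) l) :
    IsLeast {r : ℝ | ∃ W : Matrix (Fin d) (Fin z) ℝ,
        ‖W‖ ≤ 1 ∧ r = Matrix.trace (Wᵀ * C * W)}
      (∑ i ∈ Finset.univ.filter (fun i : Fin d => (i : ℕ) < m), lam i) ∧
    ∃ W : Matrix (Fin d) (Fin z) ℝ, ‖W‖ ≤ 1 ∧
      W * Wᵀ = ∑ i ∈ Finset.univ.filter (fun i : Fin d => (i : ℕ) < m),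
          vecMulVec (v i) (v i) ∧
      Matrix.trace (Wᵀ * C * W) =
        ∑ i ∈ Finset.univ.filter (fun i : Fin d => (i : ℕ) < m), lam i := by
  set s := univ.filter fun i : Fin d => (i : ℕ) < m with hs
  have htrace (W : Matrix (Fin d) (Fin z) ℝ) :
      trace (Wᵀ * C * W) = ∑ i, lam i * ((Wᵀ *ᵥ v i) ⬝ᵥ (Wᵀ *ᵥ v i)) := by
    rw [hC]
    exact trace_transpose_mul_sum_smul_vecMulVec_mul univ W lam v
  have hlower (W : Matrix (Fin d) (Fin z) ℝ) (hW : ‖W‖ ≤ 1) :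
      ∑ i ∈ s, lam i ≤ trace (Wᵀ * C * W) := by
    rw [htrace, hs, hm, hl]
    refine sum_filter_val_lt_min_le_sum_mul hmono (fun i => ?_)
      (dotProduct_transpose_mulVec_self_le_one horth hW) ?_
    · simpa using dotProduct_self_star_nonneg (Wᵀ *ᵥ v i)
    · simpa using sum_dotProduct_transpose_mulVec_le horth hW
  obtain ⟨W, hWW⟩ := exists_mul_transpose_eq_sum_vecMulVec (n := Fin z) v s (by
    rw [Fin.card_filter_val_lt, Fintype.card_fin]
    omega)
  have hW : ‖W‖ ≤ 1 :=
    norm_le_one_of_isStarProjection_mul_transpose (hWW ▸ isStarProjection_sum_vecMulVec horth s)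
  have hval : trace (Wᵀ * C * W) = ∑ i ∈ s, lam i := by
    simp [htrace, dotProduct_transpose_mulVec_self, hWW, dotProduct_sum_vecMulVec_mulVec horth]
  exact ⟨⟨⟨W, hW, hval.symm⟩, by rintro _ ⟨W', hW', rfl⟩; exact hlower W' hW'⟩, W, hW, hWW, hval⟩

/-- For symmetric `C` with eigendecomposition `C = Σ λᵢ vᵢvᵢᵀ`, `λ` nondecreasing
with `l` strictly negative eigenvalues, the minimum of `Tr(Wᵀ C W)` over operator
norm `‖W‖₂ ≤ 1` equals `Σ_{i<m} λᵢ` with `m = min{d,z,l}`, attained at `W` with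
`WWᵀ = Σ_{i<m} vᵢvᵢᵀ`. -/
theorem stmt4 {d z : ℕ} (C : Matrix (Fin d) (Fin d) ℝ)
    (lam : Fin d → ℝ) (hmono : Monotone lam)
    (v : Fin d → Fin d → ℝ) (horth : ∀ i j, v i ⬝ᵥ v j = if i = j then 1 else 0)
    (hC : C = ∑ i, lam i • vecMulVec (v i) (v i))
    (l : ℕ) (hl : l = (Finset.univ.filter fun i : Fin d => lam i < 0).card)
    (hlpos : 0 < l)
    (m : ℕ) (hm : m = min (min d z) l) :
    IsLeast {r : ℝ | ∃ W : Matrix (Fin d) (Fin z) ℝ,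
        ‖W‖ ≤ 1 ∧ r = Matrix.trace (Wᵀ * C * W)}
      (∑ i ∈ Finset.univ.filter (fun i : Fin d => (i : ℕ) < m), lam i) ∧
    ∃ W : Matrix (Fin d) (Fin z) ℝ, ‖W‖ ≤ 1 ∧
      W * Wᵀ = ∑ i ∈ Finset.univ.filter (fun i : Fin d => (i : ℕ) < m),
          vecMulVec (v i) (v i) ∧
      Matrix.trace (Wᵀ * C * W) =
        ∑ i ∈ Finset.univ.filter (fun i : Fin d => (i : ℕ) < m), lam i :=
  stmt4_general C lam hmono v horth hC l hl m hm
end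

section
/- Let W₁ ∈ ℝ^{h×d}, W₂ ∈ ℝ^{h×z} with h ≥ max(d,z). If ‖W₁^⊤W₂‖₂ ≤ 1, then there exist matrices Ŵ₁ ∈ ℝ^{h×d} and Ŵ₂ ∈ ℝ^{h×z} with ‖Ŵ₁‖₂ ≤ 1 and ‖Ŵ₂‖₂ ≤ 1 such that Ŵ₁^⊤Ŵ₂ = W₁^⊤W₂. Conversely if ‖W₁‖₂ ≤ 1 and ‖W₂‖₂ ≤ 1 then ‖W₁^⊤W₂‖₂ ≤ 1. -/
open Matrix
open scoped Matrix.Norms.L2Operator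

namespace Matrix

lemma conjTranspose_mul_self_one_submatrix_id {α m n : Type*} [Semiring α] [StarRing α]
    [Fintype m] [DecidableEq m] [DecidableEq n] {f : n → m} (hf : Function.Injective f) :
    ((1 : Matrix m m α).submatrix id f)ᴴ * (1 : Matrix m m α).submatrix id f = 1 := by
  rw [conjTranspose_submatrix, conjTranspose_one]
  exact (one_submatrix_mul f (Equiv.refl m) _).trans (submatrix_one f hf)

variable {𝕜 m n p : Type*} [RCLike 𝕜] [Fintype m] [Fintype n] [DecidableEq n]
  [Fintype p] [DecidableEq p]

lemma l2_opNorm_one_le : ‖(1 : Matrix n n 𝕜)‖ ≤ 1 := by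
  rw [cstar_norm_def, _root_.map_one]
  exact ContinuousLinearMap.norm_id_le

lemma l2_opNorm_le_one_of_conjTranspose_mul_self_eq_one {A : Matrix m n 𝕜} (hA : Aᴴ * A = 1) :
    ‖A‖ ≤ 1 := by
  have hsq : ‖A‖ * ‖A‖ ≤ 1 := by
    rw [← l2_opNorm_conjTranspose_mul_self, hA]
    exact l2_opNorm_one_le
  nlinarith [norm_nonneg A]

/-- An embedding `f : n → m` gives an isometry `E : 𝕜ⁿ → 𝕜ᵐ`, so `M = Eᴴ (E M)` with both
factors of norm at most one. -/
lemma exists_conjTranspose_mul_eq_of_l2_opNorm_le_one [DecidableEq m] {f : n → m}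
    (hf : Function.Injective f) {M : Matrix n p 𝕜} (hM : ‖M‖ ≤ 1) :
    ∃ (V₁ : Matrix m n 𝕜) (V₂ : Matrix m p 𝕜), ‖V₁‖ ≤ 1 ∧ ‖V₂‖ ≤ 1 ∧ V₁ᴴ * V₂ = M := by
  set E : Matrix m n 𝕜 := (1 : Matrix m m 𝕜).submatrix id f
  have hEE : Eᴴ * E = 1 := conjTranspose_mul_self_one_submatrix_id hf
  have hE : ‖E‖ ≤ 1 := l2_opNorm_le_one_of_conjTranspose_mul_self_eq_one hEE
  refine ⟨E, E * M, hE, ?_, by rw [← Matrix.mul_assoc, hEE, Matrix.one_mul]⟩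
  calc ‖E * M‖ ≤ ‖E‖ * ‖M‖ := l2_opNorm_mul E M
    _ ≤ 1 := mul_le_one₀ hE (norm_nonneg M) hM

lemma l2_opNorm_conjTranspose_mul_le_one [DecidableEq m] {A : Matrix m n 𝕜} {B : Matrix m p 𝕜}
    (hA : ‖A‖ ≤ 1) (hB : ‖B‖ ≤ 1) : ‖Aᴴ * B‖ ≤ 1 :=
  calc ‖Aᴴ * B‖ ≤ ‖Aᴴ‖ * ‖B‖ := l2_opNorm_mul _ _
    _ ≤ 1 := by
      rw [l2_opNorm_conjTranspose]
      exact mul_le_one₀ hA (norm_nonneg B) hB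

end Matrix

theorem stmt6_general {h d z : ℕ} (hd : d ≤ h)
    (W₁ : Matrix (Fin h) (Fin d) ℝ) (W₂ : Matrix (Fin h) (Fin z) ℝ) :
    (‖W₁ᵀ * W₂‖ ≤ 1 →
      ∃ (V₁ : Matrix (Fin h) (Fin d) ℝ) (V₂ : Matrix (Fin h) (Fin z) ℝ),
        ‖V₁‖ ≤ 1 ∧ ‖V₂‖ ≤ 1 ∧ V₁ᵀ * V₂ = W₁ᵀ * W₂) ∧
    (‖W₁‖ ≤ 1 → ‖W₂‖ ≤ 1 → ‖W₁ᵀ * W₂‖ ≤ 1) := by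
  simp only [← conjTranspose_eq_transpose_of_trivial]
  exact ⟨exists_conjTranspose_mul_eq_of_l2_opNorm_le_one (Fin.castLE_injective hd),
    l2_opNorm_conjTranspose_mul_le_one⟩

/-- Operator-norm constraints on factors versus on the product: if
`‖W₁ᵀW₂‖₂ ≤ 1` the product can be re-factorized with `‖Ŵᵢ‖₂ ≤ 1`, and
conversely `‖W₁‖₂ ≤ 1, ‖W₂‖₂ ≤ 1` imply `‖W₁ᵀW₂‖₂ ≤ 1`. -/
theorem stmt6 {h d z : ℕ} (hd : d ≤ h) (hz : z ≤ h)
    (W₁ : Matrix (Fin h) (Fin d) ℝ) (W₂ : Matrix (Fin h) (Fin z) ℝ) :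
    (‖W₁ᵀ * W₂‖ ≤ 1 →
      ∃ (V₁ : Matrix (Fin h) (Fin d) ℝ) (V₂ : Matrix (Fin h) (Fin z) ℝ),
        ‖V₁‖ ≤ 1 ∧ ‖V₂‖ ≤ 1 ∧ V₁ᵀ * V₂ = W₁ᵀ * W₂) ∧
    (‖W₁‖ ≤ 1 → ‖W₂‖ ≤ 1 → ‖W₁ᵀ * W₂‖ ≤ 1) :=
  stmt6_general hd W₁ W₂
end

section
/- Consider the loss L(W₁,W₂) = Tr(W₂^⊤W₁CW₁^⊤W₂) with W₁ ∈ ℝ^{h×d}, W₂ ∈ ℝ^{h×z} satisfying W₁^⊤W₁ = I_d, W₂^⊤W₂ = I_z, and symmetric C = VΛV^⊤ ∈ ℝ^{d×d}. Under the Grassmannian gradient flow Ẇ₂ = −2(I − W₂W₂^⊤)W₁CW₁^⊤W₂ and Ẇ₁ = −2(I − W₁W₁^⊤)W₂W₂^⊤W₁C, the matrix q(t) ∈ ℝ^{d×z} with rows qᵢ = W₂^⊤W₁vᵢ (the outputs on the eigenvectors vᵢ of C) satisfies the closed differential equation q̇ = −2[2Λq − Λqq^⊤q − qq^⊤Λq].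 -/
/-!
Write `q = Vᵀ W₁ᵀ W₂`. By the product rule `q̇ = Vᵀ Ẇ₁ᵀ W₂ + Vᵀ W₁ᵀ Ẇ₂`, and each term
collapses using only the constraints `W₁ᵀW₁ = 1`, `W₂ᵀW₂ = 1` and `VᵀV = VVᵀ = 1`, once
`C = VΛVᵀ` is substituted (with `Λ` symmetric, so that `Cᵀ = C`): the `W₁`-term is
`−2(Λq − Λq qᵀq)` and the `W₂`-term is `−2(Λq − q qᵀΛq)`.
-/

open Matrix

theorem hasDerivAt_matrix_mul_apply {𝕜 : Type*} [NontriviallyNormedField 𝕜]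
    {l m n : Type*} [Fintype m] {A : 𝕜 → Matrix l m 𝕜} {B : 𝕜 → Matrix m n 𝕜}
    {A' : Matrix l m 𝕜} {B' : Matrix m n 𝕜} {t : 𝕜}
    (hA : ∀ i j, HasDerivAt (fun s => A s i j) (A' i j) t)
    (hB : ∀ i j, HasDerivAt (fun s => B s i j) (B' i j) t) (i : l) (j : n) :
    HasDerivAt (fun s => (A s * B s) i j) ((A' * B t + A t * B') i j) t := by
  simp only [mul_apply, Matrix.add_apply, ← Finset.sum_add_distrib]
  exact HasDerivAt.fun_sum fun k _ => (hA i k).mul (hB k j)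

theorem hasDerivAt_matrix_const_mul_apply {𝕜 : Type*} [NontriviallyNormedField 𝕜]
    {l m n : Type*} [Fintype m] (M : Matrix l m 𝕜) {B : 𝕜 → Matrix m n 𝕜}
    {B' : Matrix m n 𝕜} {t : 𝕜} (hB : ∀ i j, HasDerivAt (fun s => B s i j) (B' i j) t)
    (i : l) (j : n) : HasDerivAt (fun s => (M * B s) i j) ((M * B') i j) t := by
  simpa using hasDerivAt_matrix_mul_apply (A := fun _ => M) (A' := 0)
    (fun _ _ => hasDerivAt_const t _) hB i j

section Flow

variable {R : Type*} [CommRing R]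

theorem Matrix.mul_mul_cancel_left_of_mul_eq_one {m n p : Type*} [Fintype m] [Fintype n]
    [DecidableEq n] {M : Matrix n m R} {N : Matrix m n R} (hMN : M * N = 1)
    (X : Matrix n p R) : M * (N * X) = X := by
  rw [← Matrix.mul_assoc, hMN, Matrix.one_mul]

variable {h d z : Type*} [Fintype h] [Fintype d] [Fintype z] [DecidableEq h]
  {A : Matrix h d R} {B : Matrix h z R} {C V Λ : Matrix d d R}

theorem flow₁_contribution [DecidableEq d] [DecidableEq z] (hB : Bᵀ * B = 1)
    (hV : Vᵀ * V = 1) (hVV : V * Vᵀ = 1) (hC : C = V * Λ * Vᵀ) (hΛ : Λᵀ = Λ) :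
    Vᵀ * ((1 - A * Aᵀ) * (B * Bᵀ * A * C))ᵀ * B
      = Λ * (Vᵀ * Aᵀ * B) - Λ * (Vᵀ * Aᵀ * B) * (Vᵀ * Aᵀ * B)ᵀ * (Vᵀ * Aᵀ * B) := by
  subst hC
  simp only [transpose_mul, transpose_sub, transpose_transpose, hΛ, Matrix.mul_sub,
    Matrix.sub_mul, Matrix.mul_one, Matrix.one_mul, Matrix.mul_assoc, hB,
    mul_mul_cancel_left_of_mul_eq_one hV, mul_mul_cancel_left_of_mul_eq_one hVV]

theorem flow₂_contribution [DecidableEq d] (hA : Aᵀ * A = 1) (hV : Vᵀ * V = 1)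
    (hC : C = V * Λ * Vᵀ) :
    Vᵀ * Aᵀ * ((1 - B * Bᵀ) * (A * C * Aᵀ * B))
      = Λ * (Vᵀ * Aᵀ * B) - (Vᵀ * Aᵀ * B) * (Vᵀ * Aᵀ * B)ᵀ * (Λ * (Vᵀ * Aᵀ * B)) := by
  subst hC
  simp only [transpose_mul, transpose_transpose, Matrix.mul_sub, Matrix.sub_mul,
    Matrix.one_mul, Matrix.mul_assoc, mul_mul_cancel_left_of_mul_eq_one hA,
    mul_mul_cancel_left_of_mul_eq_one hV]

end Flow

/-- Learning dynamics of linear SSL on the Grassmannian: under the projected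
gradient flows for `W₁, W₂` with orthogonality constraints and `C = VΛVᵀ`, the
output matrix `q(t) = Vᵀ W₁(t)ᵀ W₂(t)` (rows `qᵢ = W₂ᵀW₁vᵢ`) satisfies
`q̇ = −2[2Λq − Λq qᵀq − q qᵀΛq]`. -/
theorem stmt13 {h d z : ℕ}
    (W₁ : ℝ → Matrix (Fin h) (Fin d) ℝ) (W₂ : ℝ → Matrix (Fin h) (Fin z) ℝ)
    (C V Λ : Matrix (Fin d) (Fin d) ℝ) (lam : Fin d → ℝ)
    (hΛ : Λ = Matrix.diagonal lam) (hV : Vᵀ * V = 1) (hVV : V * Vᵀ = 1)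
    (hC : C = V * Λ * Vᵀ)
    (horth1 : ∀ t, (W₁ t)ᵀ * W₁ t = 1) (horth2 : ∀ t, (W₂ t)ᵀ * W₂ t = 1)
    (hflow1 : ∀ t i j, HasDerivAt (fun s => W₁ s i j)
      ((((-2 : ℝ) • ((1 - W₁ t * (W₁ t)ᵀ) * (W₂ t * (W₂ t)ᵀ * W₁ t * C)) : Matrix (Fin h) (Fin d) ℝ)) i j) t)
    (hflow2 : ∀ t i j, HasDerivAt (fun s => W₂ s i j)
      ((((-2 : ℝ) • ((1 - W₂ t * (W₂ t)ᵀ) * (W₁ t * C * (W₁ t)ᵀ * W₂ t)) : Matrix (Fin h) (Fin z) ℝ)) i j) t) :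
    ∀ t i j, HasDerivAt (fun s => (Vᵀ * (W₁ s)ᵀ * W₂ s) i j)
      (((-2 : ℝ) • ((2 : ℝ) • (Λ * (Vᵀ * (W₁ t)ᵀ * W₂ t))
        - Λ * (Vᵀ * (W₁ t)ᵀ * W₂ t) * (Vᵀ * (W₁ t)ᵀ * W₂ t)ᵀ * (Vᵀ * (W₁ t)ᵀ * W₂ t)
        - (Vᵀ * (W₁ t)ᵀ * W₂ t) * (Vᵀ * (W₁ t)ᵀ * W₂ t)ᵀ
            * (Λ * (Vᵀ * (W₁ t)ᵀ * W₂ t))) : Matrix (Fin d) (Fin z) ℝ) i j) t := by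
  intro t i j
  set W₁' : Matrix (Fin h) (Fin d) ℝ :=
    (-2 : ℝ) • ((1 - W₁ t * (W₁ t)ᵀ) * (W₂ t * (W₂ t)ᵀ * W₁ t * C))
  set W₂' : Matrix (Fin h) (Fin z) ℝ :=
    (-2 : ℝ) • ((1 - W₂ t * (W₂ t)ᵀ) * (W₁ t * C * (W₁ t)ᵀ * W₂ t))
  have hVW₁ := hasDerivAt_matrix_const_mul_apply Vᵀ (B := fun s => (W₁ s)ᵀ) (B' := W₁'ᵀ)
    fun k l => hflow1 t l k
  have hΛsymm : Λᵀ = Λ := by rw [hΛ, diagonal_transpose]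
  have hq' : Vᵀ * W₁'ᵀ * W₂ t + Vᵀ * (W₁ t)ᵀ * W₂'
      = (-2 : ℝ) • ((2 : ℝ) • (Λ * (Vᵀ * (W₁ t)ᵀ * W₂ t))
        - Λ * (Vᵀ * (W₁ t)ᵀ * W₂ t) * (Vᵀ * (W₁ t)ᵀ * W₂ t)ᵀ * (Vᵀ * (W₁ t)ᵀ * W₂ t)
        - (Vᵀ * (W₁ t)ᵀ * W₂ t) * (Vᵀ * (W₁ t)ᵀ * W₂ t)ᵀ * (Λ * (Vᵀ * (W₁ t)ᵀ * W₂ t))) := by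
    rw [transpose_smul, Matrix.mul_smul, Matrix.smul_mul, Matrix.mul_smul, flow₁_contribution (horth2 t) hV hVV hC hΛsymm,
      flow₂_contribution (horth1 t) hV hC]
    module
  simpa only [hq'] using hasDerivAt_matrix_mul_apply (B' := W₂') hVW₁ (hflow2 t) i j
end

section
/- Let Λ = diag(λ₁,...,λ_d) with λ₁ < 0 the smallest eigenvalue and e₁ the corresponding standard basis vector, and let q : ℝ → ℝ^d solve q̇/2 = −(1 − q^⊤q)Λq − (I − qq^⊤)Λq with ‖q(t)‖ ≤ 1 for all t. Then d(e₁^⊤q)/dt = 2[(1 − q^⊤q)(−λ₁) + (q^⊤Λq − λ₁)]·(e₁^⊤q), and the right-hand side is nonnegative whenever e₁^⊤q ≥ 0; it vanishes only when q = ±e₁ (given e₁^⊤q ≠ 0). -/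
/-! Write `λ₀ = lam 0`, `S = 1 - ‖q‖²` and `R = qᵀΛq - λ₀`. Since `λ₀` is the smallest eigenvalue,
`qᵀΛq ≥ λ₀‖q‖² ≥ λ₀` when `‖q‖ ≤ 1` and `λ₀ < 0`, so `S` and `R` are both nonnegative and
the rate `2(S(-λ₀) + R)·q₀` has the sign of `q₀`. It vanishes with `q₀ ≠ 0` only if `S = R = 0`:
then `‖q‖ = 1` and `qᵀΛq = λ₀‖q‖²`, which by the strict minimality of `λ₀` kills every other
coordinate. -/

open Finset

lemma forall_le_of_forall_ne_lt {ι : Type*} {lam : ι → ℝ} {i₀ : ι}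
    (hmin : ∀ i, i ≠ i₀ → lam i₀ < lam i) (i : ι) : lam i₀ ≤ lam i := by
  rcases eq_or_ne i i₀ with rfl | hi
  exacts [le_rfl, (hmin i hi).le]

section RayleighQuotient

variable {ι : Type*} [Fintype ι] (lam x : ι → ℝ) (i₀ : ι)

lemma sum_mul_sq_sub_mul_sum_sq :
    ∑ i, lam i * x i ^ 2 - lam i₀ * ∑ i, x i ^ 2 = ∑ i, (lam i - lam i₀) * x i ^ 2 := by
  rw [mul_sum, ← sum_sub_distrib]
  exact sum_congr rfl fun i _ => by ring

variable {lam}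

lemma mul_sum_sq_le_sum_mul_sq (hmin : ∀ i, lam i₀ ≤ lam i) :
    lam i₀ * ∑ i, x i ^ 2 ≤ ∑ i, lam i * x i ^ 2 := by
  have : 0 ≤ ∑ i, (lam i - lam i₀) * x i ^ 2 :=
    sum_nonneg fun i _ => mul_nonneg (sub_nonneg.mpr (hmin i)) (sq_nonneg _)
  linarith [sum_mul_sq_sub_mul_sum_sq lam x i₀]

lemma le_sum_mul_sq_of_sum_sq_le_one (hneg : lam i₀ ≤ 0) (hmin : ∀ i, lam i₀ ≤ lam i)
    (hx : ∑ i, x i ^ 2 ≤ 1) : lam i₀ ≤ ∑ i, lam i * x i ^ 2 := by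
  nlinarith [mul_sum_sq_le_sum_mul_sq x i₀ hmin]

lemma eq_zero_of_sum_mul_sq_eq (hmin : ∀ i, i ≠ i₀ → lam i₀ < lam i)
    (heq : ∑ i, lam i * x i ^ 2 = lam i₀ * ∑ i, x i ^ 2) {i : ι} (hi : i ≠ i₀) : x i = 0 := by
  have hterm : ∀ j ∈ univ, 0 ≤ (lam j - lam i₀) * x j ^ 2 := fun j _ => by
    rcases eq_or_ne j i₀ with rfl | hj
    · simp
    · exact mul_nonneg (sub_nonneg.mpr (hmin j hj).le) (sq_nonneg _)
  have hsum : ∑ j, (lam j - lam i₀) * x j ^ 2 = 0 := by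
    rw [← sum_mul_sq_sub_mul_sum_sq, heq, sub_self]
  have := (sum_eq_zero_iff_of_nonneg hterm).mp hsum i (mem_univ i)
  exact pow_eq_zero_iff two_ne_zero |>.mp <|
    (mul_eq_zero.mp this).resolve_left (sub_ne_zero.mpr (hmin i hi).ne')

end RayleighQuotient

lemma eq_single_or_eq_neg_single_of_sum_sq_eq_one {ι : Type*} [Fintype ι] [DecidableEq ι]
    {x : ι → ℝ} {i₀ : ι} (hzero : ∀ i, i ≠ i₀ → x i = 0) (hx : ∑ i, x i ^ 2 = 1) :
    x = Pi.single i₀ 1 ∨ x = -Pi.single i₀ 1 := by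
  have hsq : x i₀ ^ 2 = 1 := by
    rwa [sum_eq_single i₀ (fun i _ hi => by simp [hzero i hi]) (by simp)] at hx
  have hext : ∀ c, x i₀ = c → x = Pi.single i₀ c := fun c hc => by
    funext i
    rcases eq_or_ne i i₀ with rfl | hi
    · simp [hc]
    · simp [hzero i hi, hi]
  rcases sq_eq_one_iff.mp hsq with h | h
  · exact .inl (hext 1 h)
  · exact .inr (by rw [hext (-1) h, Pi.single_neg])

section GrowthRate

variable {ι : Type*} [Fintype ι] {lam x : ι → ℝ} {i₀ : ι}

variable (lam x i₀) in
def growthRate : ℝ := (1 - ∑ i, x i ^ 2) * (-lam i₀) + (∑ i, lam i * x i ^ 2 - lam i₀)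

lemma growthRate_nonneg (hneg : lam i₀ ≤ 0) (hmin : ∀ i, lam i₀ ≤ lam i)
    (hx : ∑ i, x i ^ 2 ≤ 1) : 0 ≤ growthRate lam x i₀ :=
  add_nonneg (mul_nonneg (sub_nonneg.mpr hx) (neg_nonneg.mpr hneg))
    (sub_nonneg.mpr (le_sum_mul_sq_of_sum_sq_le_one x i₀ hneg hmin hx))

lemma eq_single_or_eq_neg_single_of_growthRate_eq_zero [DecidableEq ι] (hneg : lam i₀ < 0)
    (hmin : ∀ i, i ≠ i₀ → lam i₀ < lam i) (hx : ∑ i, x i ^ 2 ≤ 1)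
    (hzero : growthRate lam x i₀ = 0) : x = Pi.single i₀ 1 ∨ x = -Pi.single i₀ 1 := by
  obtain ⟨hS, hR⟩ := (add_eq_zero_iff_of_nonneg
    (mul_nonneg (sub_nonneg.mpr hx) (neg_nonneg.mpr hneg.le))
    (sub_nonneg.mpr (le_sum_mul_sq_of_sum_sq_le_one x i₀ hneg.le (forall_le_of_forall_ne_lt hmin)
      hx))).mp hzero
  have hunit : ∑ i, x i ^ 2 = 1 :=
    (sub_eq_zero.mp ((mul_eq_zero.mp hS).resolve_right (neg_ne_zero.mpr hneg.ne))).symm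
  have heq : ∑ i, lam i * x i ^ 2 = lam i₀ * ∑ i, x i ^ 2 := by
    rw [hunit, mul_one, ← sub_eq_zero, hR]
  exact eq_single_or_eq_neg_single_of_sum_sq_eq_one
    (fun i hi => eq_zero_of_sum_mul_sq_eq x i₀ hmin heq hi) hunit

end GrowthRate

/-- For the `z = 1` SSL dynamics with `λ₀ < 0` the smallest eigenvalue:
`d(e₁ᵀq)/dt = 2[(1−qᵀq)(−λ₀) + (qᵀΛq − λ₀)]·(e₁ᵀq)`, the rate is nonnegative
whenever `e₁ᵀq ≥ 0`, and it vanishes (given `e₁ᵀq ≠ 0`) only when `q = ±e₁`. -/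
theorem stmt15 {d : ℕ} [NeZero d] (lam : Fin d → ℝ)
    (hneg : lam 0 < 0) (hmin : ∀ i, i ≠ 0 → lam 0 < lam i)
    (q : ℝ → Fin d → ℝ) (hnorm : ∀ t, ∑ i, (q t i) ^ 2 ≤ 1)
    (hode : ∀ t i, HasDerivAt (fun s => q s i)
      (2 * (-(1 - ∑ j, (q t j) ^ 2) * (lam i * q t i)
        - (lam i * q t i - q t i * ∑ j, lam j * (q t j) ^ 2))) t) :
    (∀ t, HasDerivAt (fun s => q s 0)
        (2 * ((1 - ∑ i, (q t i) ^ 2) * (-lam 0)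
          + ((∑ i, lam i * (q t i) ^ 2) - lam 0)) * q t 0) t) ∧
    (∀ t, 0 ≤ q t 0 →
      0 ≤ 2 * ((1 - ∑ i, (q t i) ^ 2) * (-lam 0)
          + ((∑ i, lam i * (q t i) ^ 2) - lam 0)) * q t 0) ∧
    (∀ t, q t 0 ≠ 0 →
      2 * ((1 - ∑ i, (q t i) ^ 2) * (-lam 0)
          + ((∑ i, lam i * (q t i) ^ 2) - lam 0)) * q t 0 = 0 →
      q t = Pi.single 0 1 ∨ q t = -Pi.single 0 1) := by
  refine ⟨fun t => ?_, fun t h0 => ?_, fun t h0 hrate => ?_⟩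
  · convert hode t 0 using 1
    ring
  · have := growthRate_nonneg hneg.le (forall_le_of_forall_ne_lt hmin) (hnorm t)
    exact mul_nonneg (mul_nonneg zero_le_two this) h0
  · have : growthRate lam (q t) 0 = 0 :=
      (mul_eq_zero.mp ((mul_eq_zero.mp hrate).resolve_right h0)).resolve_left two_ne_zero
    exact eq_single_or_eq_neg_single_of_growthRate_eq_zero hneg hmin (hnorm t) this
end
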